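/- arXiv:1704.08856 — 2 statements merged into one kernel-verified Lean document; each statement's English description precedes it below -/
import Mathlib

section
/- The pair (φ, R) with φ(x) = (4/3)x log|x| and R(x) = (2/|x|²)x⊗x − I belongs to W^{1,2}(B³, ℝ³) × W^{1,p}(B³, ℝ^{3×3}) for every p with 2 ≤ p < 3, but R ∉ W^{1,3}(B³). -/
/-!
Away from the origin both maps are smooth, and on the unit ball one computes `|R| ≡ √3`,
`|φ| ≤ 4/3`, `|DR(x)| = 4/|x|` and `|Dφ(x)|² = (16/9)(1 + 2 log|x| + 3 log²|x|) ≤ 32/|x|`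
(Frobenius norms; the last step uses `log² r · r ≤ 4` on `(0, 1]`). Everything then reduces to
the fact that `|x|^s` is integrable on a ball of `ℝ^d` iff `s > -d`, which in polar coordinates
is the integrability of `y^(d - 1 + s)` on `(0, r)`.
-/

open MeasureTheory

/-- The map `R(x) = (2/|x|²) x⊗x − I`. -/
noncomputable def Rmap (x : EuclideanSpace ℝ (Fin 3)) : Matrix (Fin 3) (Fin 3) ℝ :=
  Matrix.of fun i j => (2 / ‖x‖ ^ 2) * (x i * x j) - if i = j then (1 : ℝ) else 0

/-- The map `φ(x) = (4/3) x log|x|`. -/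
noncomputable def phiMap (x : EuclideanSpace ℝ (Fin 3)) : EuclideanSpace ℝ (Fin 3) :=
  ((4 / 3 : ℝ) * Real.log ‖x‖) • x

/-- Frobenius norm of the (pointwise classical) gradient of `φ`. -/
noncomputable def DphiFrob (x : EuclideanSpace ℝ (Fin 3)) : ℝ :=
  Real.sqrt (∑ i : Fin 3, ∑ k : Fin 3,
    (fderiv ℝ (fun y => phiMap y i) x (EuclideanSpace.single k 1)) ^ 2)

/-- Frobenius norm of the (pointwise classical) gradient of `R`. -/
noncomputable def DRFrob (x : EuclideanSpace ℝ (Fin 3)) : ℝ :=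
  Real.sqrt (∑ i : Fin 3, ∑ j : Fin 3, ∑ k : Fin 3,
    (fderiv ℝ (fun y => Rmap y i j) x (EuclideanSpace.single k 1)) ^ 2)

open Metric Set
open scoped ENNReal

section NormRpow

variable {E : Type*} [NormedAddCommGroup E] [NormedSpace ℝ E] [FiniteDimensional ℝ E]
  [MeasurableSpace E] [BorelSpace E] [Nontrivial E] {μ : Measure E} [μ.IsAddHaarMeasure]

theorem integrableOn_ball_norm_rpow_iff {r s : ℝ} (hr : 0 < r) :
    IntegrableOn (fun x : E => ‖x‖ ^ s) (ball 0 r) μ ↔ -(Module.finrank ℝ E : ℝ) < s := by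
  have hd : 1 ≤ Module.finrank ℝ E := Module.finrank_pos
  rw [integrableOn_fun_norm_addHaar μ (f := fun y => y ^ s)]
  have hcongr : EqOn (fun y : ℝ => y ^ (Module.finrank ℝ E - 1) • y ^ s)
      (fun y => y ^ ((Module.finrank ℝ E : ℝ) - 1 + s)) (Ioo 0 r) := by
    intro y hy
    dsimp only
    rw [smul_eq_mul, ← Real.rpow_natCast, Real.rpow_add hy.1, Nat.cast_sub hd, Nat.cast_one]
  rw [integrableOn_congr_fun hcongr measurableSet_Ioo,
    intervalIntegral.integrableOn_Ioo_rpow_iff hr]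
  constructor <;> intro h <;> linarith

theorem memLp_norm_rpow_ball_iff {r s : ℝ} {p : ℝ≥0∞} (hr : 0 < r) (hp0 : p ≠ 0) (hp : p ≠ ∞) :
    MemLp (fun x : E => ‖x‖ ^ s) p (μ.restrict (ball 0 r)) ↔
      -(Module.finrank ℝ E : ℝ) < s * p.toReal := by
  have hmeas : Measurable fun x : E => ‖x‖ ^ s := by fun_prop
  rw [← integrable_norm_rpow_iff hmeas.aestronglyMeasurable hp0 hp,
    ← integrableOn_ball_norm_rpow_iff (μ := μ) hr]
  refine integrable_congr (Filter.Eventually.of_forall fun x => ?_)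
  simp only [Real.norm_of_nonneg (Real.rpow_nonneg (norm_nonneg x) s),
    ← Real.rpow_mul (norm_nonneg x)]

end NormRpow

local notation "ℝ³" => EuclideanSpace ℝ (Fin 3)

lemma norm_sq_eq_sum_coord_sq (x : ℝ³) : ‖x‖ ^ 2 = x 0 ^ 2 + x 1 ^ 2 + x 2 ^ 2 := by
  rw [EuclideanSpace.norm_eq, Real.sq_sqrt (by positivity)]
  simp [Fin.sum_univ_three, sq_abs]

lemma hasFDerivAt_coord (x : ℝ³) (i : Fin 3) :
    HasFDerivAt (fun y : ℝ³ => y i) (EuclideanSpace.proj (𝕜 := ℝ) i) x :=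
  (EuclideanSpace.proj (𝕜 := ℝ) i).hasFDerivAt

lemma inner_single_one (x : ℝ³) (k : Fin 3) : inner ℝ x (EuclideanSpace.single k 1) = x k := by
  simp [EuclideanSpace.inner_single_right]

lemma fderiv_phiMap_apply {x : ℝ³} (hx : x ≠ 0) (i k : Fin 3) :
    fderiv ℝ (fun y => phiMap y i) x (EuclideanSpace.single k 1) =
      4 / 3 * (x i * x k / ‖x‖ ^ 2 + if i = k then Real.log ‖x‖ else 0) := by
  have hx2 : ‖x‖ ^ 2 ≠ 0 := by positivity
  have hlog : HasFDerivAt (fun y : ℝ³ => Real.log (‖y‖ ^ 2)) ((‖x‖ ^ 2)⁻¹ • 2 • innerSL ℝ x) x :=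
    (hasStrictFDerivAt_norm_sq x).hasFDerivAt.log hx2
  -- differentiate `log (‖y‖ ^ 2)` rather than `log ‖y‖`: `‖·‖ ^ 2` is smooth everywhere
  have hphi : (fun y => phiMap y i) = fun y : ℝ³ => 2 / 3 * Real.log (‖y‖ ^ 2) * y i := by
    funext y
    simp only [phiMap, PiLp.smul_apply, smul_eq_mul, Real.log_pow]
    push_cast
    ring
  have hd : HasFDerivAt (fun y : ℝ³ => 2 / 3 * Real.log (‖y‖ ^ 2) * y i) _ x :=
    (hlog.const_mul (2 / 3 : ℝ)).mul (hasFDerivAt_coord x i)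
  rw [hphi, hd.fderiv]
  simp only [Real.log_pow, Nat.cast_ofNat, add_apply, smul_apply, PiLp.proj_apply,
    PiLp.single_apply, smul_eq_mul, mul_ite, mul_one, mul_zero, coe_innerSL_apply,
    inner_single_one, nsmul_eq_mul]
  split_ifs with h
  · subst h; field_simp; ring
  · field_simp; ring

lemma fderiv_Rmap_apply {x : ℝ³} (hx : x ≠ 0) (i j k : Fin 3) :
    fderiv ℝ (fun y => Rmap y i j) x (EuclideanSpace.single k 1) =
      2 * ((if i = k then x j else 0) + (if j = k then x i else 0)) / ‖x‖ ^ 2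
        - 4 * x i * x j * x k / (‖x‖ ^ 2) ^ 2 := by
  have hx2 : ‖x‖ ^ 2 ≠ 0 := by positivity
  have hinv : HasFDerivAt (fun y : ℝ³ => (‖y‖ ^ 2)⁻¹)
      (-((‖x‖ ^ 2) ^ 2)⁻¹ • 2 • innerSL ℝ x) x :=
    (hasDerivAt_inv hx2).comp_hasFDerivAt x (hasStrictFDerivAt_norm_sq x).hasFDerivAt
  have hR : (fun y => Rmap y i j)
      = fun y : ℝ³ => 2 * (‖y‖ ^ 2)⁻¹ * (y i * y j) - if i = j then 1 else 0 := by
    funext y; simp [Rmap, div_eq_mul_inv]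
  have hd : HasFDerivAt
      (fun y : ℝ³ => 2 * (‖y‖ ^ 2)⁻¹ * (y i * y j) - if i = j then 1 else 0) _ x :=
    ((hinv.const_mul 2).mul ((hasFDerivAt_coord x i).mul (hasFDerivAt_coord x j))).sub_const _
  rw [hR, hd.fderiv]
  simp only [smul_add, Pi.mul_apply, neg_smul, smul_neg, add_apply, smul_apply,
    PiLp.proj_apply, PiLp.single_apply, smul_eq_mul, mul_ite, mul_one, mul_zero, neg_apply,
    coe_innerSL_apply, inner_single_one, nsmul_eq_mul, Nat.cast_ofNat]
  split_ifs <;> field_simp <;> ring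

lemma sum_sq_fderiv_Rmap {x : ℝ³} (hx : x ≠ 0) :
    ∑ i : Fin 3, ∑ j : Fin 3, ∑ k : Fin 3,
      (fderiv ℝ (fun y => Rmap y i j) x (EuclideanSpace.single k 1)) ^ 2 = 16 / ‖x‖ ^ 2 := by
  have hx2 : ‖x‖ ^ 2 ≠ 0 := by positivity
  simp only [fderiv_Rmap_apply hx, Fin.sum_univ_three]
  simp only [Fin.isValue, Fin.reduceEq, if_true, if_false]
  rw [norm_sq_eq_sum_coord_sq] at hx2 ⊢
  field_simp
  ring

lemma sum_sq_fderiv_phiMap {x : ℝ³} (hx : x ≠ 0) :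
    ∑ i : Fin 3, ∑ k : Fin 3, (fderiv ℝ (fun y => phiMap y i) x (EuclideanSpace.single k 1)) ^ 2
      = 16 / 9 * (1 + 2 * Real.log ‖x‖ + 3 * Real.log ‖x‖ ^ 2) := by
  have hx2 : ‖x‖ ^ 2 ≠ 0 := by positivity
  simp only [fderiv_phiMap_apply hx, Fin.sum_univ_three]
  simp only [Fin.isValue, Fin.reduceEq, if_true, if_false]
  rw [norm_sq_eq_sum_coord_sq] at hx2 ⊢
  field_simp
  ring

lemma sum_sq_Rmap (x : ℝ³) : ∑ i : Fin 3, ∑ j : Fin 3, Rmap x i j ^ 2 = 3 := by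
  rcases eq_or_ne x 0 with rfl | hx
  · simp [Rmap]
  have hx2 : ‖x‖ ^ 2 ≠ 0 := by positivity
  simp only [Rmap, Matrix.of_apply, Fin.sum_univ_three]
  simp only [Fin.isValue, Fin.reduceEq, if_true, if_false]
  rw [norm_sq_eq_sum_coord_sq] at hx2 ⊢
  field_simp
  ring

lemma DRFrob_eq {x : ℝ³} (hx : x ≠ 0) : DRFrob x = 4 * ‖x‖ ^ (-1 : ℝ) := by
  rw [DRFrob, sum_sq_fderiv_Rmap hx, Real.rpow_neg_one, div_eq_mul_inv, ← inv_pow,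
    show (16 : ℝ) = 4 ^ 2 by norm_num, ← mul_pow, Real.sqrt_sq (by positivity)]

lemma log_sq_mul_self_le {r : ℝ} (h0 : 0 < r) (h1 : r ≤ 1) : Real.log r ^ 2 * r ≤ 4 := by
  have h := Real.abs_log_mul_self_rpow_lt r (1 / 2) h0 h1 (by norm_num)
  have hsq : (r ^ (1 / 2 : ℝ)) ^ 2 = r := by
    rw [← Real.rpow_natCast, ← Real.rpow_mul h0.le]; norm_num
  calc Real.log r ^ 2 * r = |Real.log r * r ^ (1 / 2 : ℝ)| ^ 2 := by rw [sq_abs, mul_pow, hsq]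
    _ ≤ 2 ^ 2 := pow_le_pow_left₀ (abs_nonneg _) (by linarith) 2
    _ = 4 := by norm_num

lemma DphiFrob_sq_le {x : ℝ³} (hx : x ≠ 0) (hx1 : ‖x‖ < 1) :
    DphiFrob x ^ 2 ≤ 32 * ‖x‖ ^ (-1 : ℝ) := by
  have hr : 0 < ‖x‖ := norm_pos_iff.2 hx
  have hL := log_sq_mul_self_le hr hx1.le
  rw [DphiFrob, Real.sq_sqrt (by positivity), sum_sq_fderiv_phiMap hx, Real.rpow_neg_one,
    ← div_eq_mul_inv, le_div_iff₀ hr]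
  nlinarith [mul_nonneg hr.le (sq_nonneg (Real.log ‖x‖ - 1))]

lemma norm_phiMap_le {x : ℝ³} (hx : ‖x‖ ≤ 1) : ‖phiMap x‖ ≤ 4 / 3 := by
  rcases eq_or_ne x 0 with rfl | hx0
  · simp [phiMap]; norm_num
  have h := Real.abs_log_mul_self_lt ‖x‖ (norm_pos_iff.2 hx0) hx
  rw [phiMap, norm_smul, Real.norm_eq_abs, abs_mul, abs_of_pos (by norm_num : (0 : ℝ) < 4 / 3),
    mul_assoc, ← abs_norm x, ← abs_mul, abs_norm]
  nlinarith

lemma measurable_phiMap : Measurable phiMap := by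
  unfold phiMap; fun_prop

lemma measurable_DphiFrob : Measurable DphiFrob := by
  unfold DphiFrob; measurability

instance : IsFiniteMeasure (volume.restrict (ball (0 : ℝ³) 1)) :=
  isFiniteMeasure_restrict.2 measure_ball_lt_top.ne

lemma ae_restrict_ball_norm_lt_one : ∀ᵐ x ∂(volume.restrict (ball (0 : ℝ³) 1)), ‖x‖ < 1 :=
  (ae_restrict_mem measurableSet_ball).mono fun _ hx => mem_ball_zero_iff.1 hx

lemma memLp_phiMap (p : ℝ≥0∞) : MemLp phiMap p (volume.restrict (ball (0 : ℝ³) 1)) :=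
  MemLp.of_bound measurable_phiMap.aestronglyMeasurable (4 / 3)
    (ae_restrict_ball_norm_lt_one.mono fun _ hx => norm_phiMap_le hx.le)

lemma memLp_frobenius_Rmap (p : ℝ≥0∞) :
    MemLp (fun x => Real.sqrt (∑ i : Fin 3, ∑ j : Fin 3, Rmap x i j ^ 2)) p
      (volume.restrict (ball (0 : ℝ³) 1)) := by
  simp only [sum_sq_Rmap]
  exact memLp_const _

lemma memLp_DphiFrob_two : MemLp DphiFrob 2 (volume.restrict (ball (0 : ℝ³) 1)) := by
  rw [memLp_two_iff_integrable_sq measurable_DphiFrob.aestronglyMeasurable]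
  refine (((integrableOn_ball_norm_rpow_iff (s := -1) one_pos).2 ?_).const_mul 32).mono' ?_ ?_
  · rw [finrank_euclideanSpace_fin]; norm_num
  · exact (measurable_DphiFrob.pow_const 2).aestronglyMeasurable
  · filter_upwards [ae_restrict_ball_norm_lt_one, Measure.ae_ne _ 0] with x hx hx0
    rw [Real.norm_of_nonneg (sq_nonneg _)]
    exact DphiFrob_sq_le hx0 hx

lemma memLp_DRFrob_iff {p : ℝ≥0∞} (hp0 : p ≠ 0) (hp : p ≠ ∞) :
    MemLp DRFrob p (volume.restrict (ball (0 : ℝ³) 1)) ↔ p.toReal < 3 := by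
  have hDR : DRFrob =ᵐ[volume.restrict (ball (0 : ℝ³) 1)] fun x => 4 * ‖x‖ ^ (-1 : ℝ) :=
    (Measure.ae_ne _ 0).mono fun x hx => DRFrob_eq hx
  rw [memLp_congr_ae hDR]
  refine ⟨fun h => ?_, fun h => MemLp.const_mul ?_ 4⟩
  · have := (memLp_norm_rpow_ball_iff one_pos hp0 hp).1 (by simpa using h.const_mul 4⁻¹)
    rw [finrank_euclideanSpace_fin, Nat.cast_ofNat] at this
    linarith
  · rw [memLp_norm_rpow_ball_iff one_pos hp0 hp, finrank_euclideanSpace_fin, Nat.cast_ofNat]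
    linarith

/-- `(φ, R) ∈ W^{1,2}(B³,ℝ³) × W^{1,p}(B³,ℝ^{3×3})` for all `2 ≤ p < 3`,
but `R ∉ W^{1,3}(B³)`. -/
theorem stmt8 :
    MemLp phiMap 2 (volume.restrict (Metric.ball (0 : EuclideanSpace ℝ (Fin 3)) 1)) ∧
    MemLp DphiFrob 2 (volume.restrict (Metric.ball (0 : EuclideanSpace ℝ (Fin 3)) 1)) ∧
    (∀ p : ℝ, 2 ≤ p → p < 3 →
      MemLp (fun x => Real.sqrt (∑ i : Fin 3, ∑ j : Fin 3, (Rmap x i j) ^ 2))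
          (ENNReal.ofReal p)
          (volume.restrict (Metric.ball (0 : EuclideanSpace ℝ (Fin 3)) 1)) ∧
      MemLp DRFrob (ENNReal.ofReal p)
          (volume.restrict (Metric.ball (0 : EuclideanSpace ℝ (Fin 3)) 1))) ∧
    ¬ MemLp DRFrob 3 (volume.restrict (Metric.ball (0 : EuclideanSpace ℝ (Fin 3)) 1)) := by
  refine ⟨memLp_phiMap 2, memLp_DphiFrob_two, fun p hp2 hp3 => ⟨memLp_frobenius_Rmap _, ?_⟩, ?_⟩
  · rw [memLp_DRFrob_iff (by simp; linarith) ENNReal.ofReal_ne_top,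
      ENNReal.toReal_ofReal (by linarith)]
    exact hp3
  · rw [memLp_DRFrob_iff (by norm_num) (by norm_num)]
    norm_num
end

section
/- Let m ≥ 2, p > 1, ε ∈ (0,1], and A = (a_{ij}) an m×m real symmetric matrix satisfying a_{1j} = a_{j1} given, with τ := Σ_{h=1}^m a_{hh}. Then Σ_{i,j} a_{ij}² ≥ ((m−ε)/(m−1)) a₁₁² + 2 Σ_{h=2}^m a_{h1}² − ((ε^{−1}−1)/(m−1)) τ², i.e. the pointwise algebraic estimate used in the improved Kato inequality. -/
/-!
Keep only the diagonal and the entries of the first row and column: by symmetry the latter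
contribute `2 ∑_{h ≥ 2} a_{h1}²`. The remaining diagonal `a₂₂, …, a_mm` sums to `τ - a₁₁`, so
Cauchy–Schwarz gives `∑_{h ≥ 2} a_{hh}² ≥ (τ - a₁₁)² / (m - 1)`, and Young's inequality bounds
`(τ - a₁₁)²` below by `(1 - ε) a₁₁² - (ε⁻¹ - 1) τ²`.
-/

open Finset

lemma one_sub_mul_sq_sub_le_sq_sub {ε : ℝ} (hε : 0 < ε) (x y : ℝ) :
    (1 - ε) * x ^ 2 - (ε⁻¹ - 1) * y ^ 2 ≤ (y - x) ^ 2 := by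
  have gap_eq : (y - x) ^ 2 - ((1 - ε) * x ^ 2 - (ε⁻¹ - 1) * y ^ 2) = (ε * x - y) ^ 2 / ε := by
    field_simp
    ring
  have : 0 ≤ (ε * x - y) ^ 2 / ε := by positivity
  linarith

section

variable {ι : Type*} [Fintype ι] [DecidableEq ι]

lemma sum_sq_diag_add_row_add_col_le_sum_sq (a : ι → ι → ℝ) (i₀ : ι) :
    ∑ i, a i i ^ 2 + ∑ j ∈ univ.erase i₀, a i₀ j ^ 2 + ∑ i ∈ univ.erase i₀, a i i₀ ^ 2
      ≤ ∑ i, ∑ j, a i j ^ 2 := by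
  have row_ge : ∀ i ∈ univ.erase i₀, a i i₀ ^ 2 + a i i ^ 2 ≤ ∑ j, a i j ^ 2 := by
    intro i hi
    rw [← sum_pair (f := fun j => a i j ^ 2) (Finset.ne_of_mem_erase hi).symm]
    exact sum_le_sum_of_subset_of_nonneg (subset_univ _) fun j _ _ => sq_nonneg _
  have rows_ge := sum_le_sum row_ge
  rw [sum_add_distrib] at rows_ge
  rw [← add_sum_erase _ _ (mem_univ i₀), ← add_sum_erase _ _ (mem_univ i₀),
    ← add_sum_erase _ _ (mem_univ i₀)]
  linarith

lemma mul_sq_sub_mul_sq_sum_le_sum_sq {ε : ℝ} (hε : 0 < ε) (hι : 1 < Fintype.card ι)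
    (d : ι → ℝ) (i₀ : ι) :
    ((Fintype.card ι - ε) / (Fintype.card ι - 1)) * d i₀ ^ 2
        - ((ε⁻¹ - 1) / (Fintype.card ι - 1)) * (∑ i, d i) ^ 2
      ≤ ∑ i, d i ^ 2 := by
  have hm : (0 : ℝ) < Fintype.card ι - 1 := by
    have : (1 : ℝ) < Fintype.card ι := by exact_mod_cast hι
    linarith
  have hcard : ((univ.erase i₀).card : ℝ) = Fintype.card ι - 1 := by
    rw [card_erase_of_mem (mem_univ i₀), card_univ, Nat.cast_pred (by omega)]
  have cauchy_schwarz : (∑ i ∈ univ.erase i₀, d i) ^ 2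
      ≤ (Fintype.card ι - 1) * ∑ i ∈ univ.erase i₀, d i ^ 2 :=
    hcard ▸ sq_sum_le_card_mul_sum_sq
  have young := one_sub_mul_sq_sub_le_sq_sub hε (d i₀) (∑ i, d i)
  rw [← add_sum_erase _ _ (mem_univ i₀)] at young ⊢
  rw [← add_sum_erase _ _ (mem_univ i₀), div_mul_eq_mul_div, div_mul_eq_mul_div,
    div_sub_div_same, div_le_iff₀ hm]
  linear_combination young + cauchy_schwarz

end

theorem stmt14_general (n : ℕ) (ε : ℝ) (hε : 0 < ε)
    (a : Fin (n + 2) → Fin (n + 2) → ℝ) (hsymm : ∀ i j, a i j = a j i)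
    (τ : ℝ) (hτ : τ = ∑ h, a h h) :
    (((n + 2 : ℝ) - ε) / ((n + 2 : ℝ) - 1)) * a 0 0 ^ 2 +
        2 * ∑ h ∈ Finset.univ \ {(0 : Fin (n + 2))}, a h 0 ^ 2 -
        ((ε⁻¹ - 1) / ((n + 2 : ℝ) - 1)) * τ ^ 2
      ≤ ∑ i, ∑ j, a i j ^ 2 := by
  have diag := mul_sq_sub_mul_sq_sum_le_sum_sq hε (by simp) (fun h => a h h) 0
  have entries := sum_sq_diag_add_row_add_col_le_sum_sq a 0
  simp only [Fintype.card_fin, Nat.cast_add, Nat.cast_ofNat] at diag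
  simp only [hsymm 0] at entries
  rw [sdiff_singleton_eq_erase, hτ]
  linarith

/-- the pointwise algebraic estimate used in the improved Kato inequality,
for an `m×m` symmetric matrix, `m = n + 2 ≥ 2`. -/
theorem stmt14 (n : ℕ) (p ε : ℝ) (hp : 1 < p) (hε : 0 < ε) (hε1 : ε ≤ 1)
    (a : Fin (n + 2) → Fin (n + 2) → ℝ) (hsymm : ∀ i j, a i j = a j i)
    (τ : ℝ) (hτ : τ = ∑ h, a h h) :
    (((n + 2 : ℝ) - ε) / ((n + 2 : ℝ) - 1)) * a 0 0 ^ 2 +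
        2 * ∑ h ∈ Finset.univ \ {(0 : Fin (n + 2))}, a h 0 ^ 2 -
        ((ε⁻¹ - 1) / ((n + 2 : ℝ) - 1)) * τ ^ 2
      ≤ ∑ i, ∑ j, a i j ^ 2 :=
  stmt14_general n ε hε a hsymm τ hτ
end
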